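/- arXiv:2101.05142 — 5 statements merged into one kernel-verified Lean document; each statement's English description precedes it below -/
import Mathlib

section
/- Let a, d ∈ F_p^n and c ∈ F_p. The renaming Δ_d, which maps the literal ξ_{i,k} to ξ_{i,k+d_i} (and negated literals correspondingly), maps the clause set F(a,c) onto itself if and only if a·d = 0, provided a ≠ 0; more precisely: if a·d = 0 then Δ_d(F(a,c)) = F(a,c), and if a·d ≠ 0 then there is a clause C ∈ F(a,c) with Δ_d(C) ∉ F(a,c). -/
/-! Encoding of linear equations over `F_p` as CNF formulas, with variables
`ξ_{i,k}` for `i : Fin n`, `k : ZMod p`. -/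

/-- `supp` of a vector: the set of indices with nonzero entry. -/
def suppV {n : ℕ} {K : Type*} [Zero K] [DecidableEq K] (a : Fin n → K) : Finset (Fin n) :=
  Finset.univ.filter (fun i => a i ≠ 0)

/-- `P(a,c)` : assignments violating the equation `a·x = c`, supported on `supp(a)`. -/
def PViol {n p : ℕ} (a : Fin n → ZMod p) (c : ZMod p) : Set (Fin n → ZMod p) :=
  {x | dotProduct a x ≠ c ∧ suppV x ⊆ suppV a}

/-- The clause `C_a(x) = ⋁_{i ∈ supp(a)} ¬ξ_{i,x_i}`. -/
def CCl {n p : ℕ} (a x : Fin n → ZMod p) : Finset ((Fin n × ZMod p) × Bool) :=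
  (suppV a).image (fun i => ((i, x i), false))

/-- The CNF formula `F(a,c)` for a single equation `a·x = c`. -/
def FEq {n p : ℕ} (a : Fin n → ZMod p) (c : ZMod p) :
    Set (Finset ((Fin n × ZMod p) × Bool)) :=
  (fun x => CCl a x) '' (PViol a c)

/-- The CNF formula `F(A,b)` for a system of equations. -/
def FSys {m n p : ℕ} (A : Matrix (Fin m) (Fin n) (ZMod p)) (b : Fin m → ZMod p) :
    Set (Finset ((Fin n × ZMod p) × Bool)) :=
  ⋃ i, FEq (A i) (b i)

/-- The clauses `V = ⋀_i ⋁_k ξ_{i,k}`. -/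
def VCl (n p : ℕ) [NeZero p] : Set (Finset ((Fin n × ZMod p) × Bool)) :=
  {C | ∃ i : Fin n, C = Finset.univ.image (fun k : ZMod p => ((i, k), true))}

/-- The renaming `Δ_d` on literals: `ξ_{i,k} ↦ ξ_{i,k+d_i}` (preserving polarity). -/
def DeltaLit {n p : ℕ} (d : Fin n → ZMod p) (l : (Fin n × ZMod p) × Bool) :
    (Fin n × ZMod p) × Bool :=
  ((l.1.1, l.1.2 + d l.1.1), l.2)

/-- `Δ_d` applied to a clause, literal by literal. -/
def DeltaCl {n p : ℕ} (d : Fin n → ZMod p) (C : Finset ((Fin n × ZMod p) × Bool)) :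
    Finset ((Fin n × ZMod p) × Bool) :=
  C.image (DeltaLit d)

/-!
Renaming by `Δ_d` shifts the clause of an assignment: `Δ_d(C_a(x)) = C_a(x + d)`. Moreover,
`C_a(y)` depends only on `y` restricted to `supp(a)`, as does `a·y`, so `C_a(y) ∈ F(a,c)` iff
`a·y ≠ c` for every `y`, supported on `supp(a)` or not. Thus `Δ_d` acts on `F(a,c)` as
translation by `d` acts on `{y | a·y ≠ c}`, which is translation invariant when `a·d = 0`. When
`a·d ≠ 0`, an `x` with `a·x = c - a·d` (it exists since `a ≠ 0` over a field) gives a clause of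
`F(a,c)` sent to `C_a(x + d)` with `a·(x + d) = c`.
-/

theorem exists_dotProduct_eq {ι K : Type*} [Fintype ι] [DecidableEq ι] [Field K]
    {a : ι → K} (ha : a ≠ 0) (t : K) : ∃ x, a ⬝ᵥ x = t := by
  obtain ⟨i, hi⟩ := Function.ne_iff.1 ha
  exact ⟨Pi.single i (t / a i), by rw [dotProduct_single, mul_div_cancel₀ t hi]⟩

theorem image_add_right_setOf_dotProduct_ne {ι R : Type*} [Fintype ι] [CommRing R]
    {a d : ι → R} (had : a ⬝ᵥ d = 0) (c : R) :
    (· + d) '' {y | a ⬝ᵥ y ≠ c} = {y | a ⬝ᵥ y ≠ c} := by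
  rw [Set.image_add_right]
  ext y
  simp [dotProduct_add, had]

section Clauses

variable {n p : ℕ}

theorem CCl_congr {a y z : Fin n → ZMod p} (h : ∀ i ∈ suppV a, y i = z i) :
    CCl a y = CCl a z :=
  Finset.image_congr fun i hi => by rw [h i hi]

theorem eq_of_CCl_eq {a y z : Fin n → ZMod p} (h : CCl a y = CCl a z) :
    ∀ i ∈ suppV a, y i = z i := by
  intro i hi
  have hmem : ((i, y i), false) ∈ CCl a z := h ▸ Finset.mem_image_of_mem _ hi
  obtain ⟨j, -, hj⟩ := Finset.mem_image.1 hmem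
  simp only [Prod.mk.injEq, and_true] at hj
  obtain ⟨rfl, hzy⟩ := hj
  exact hzy.symm

theorem dotProduct_congr_suppV {a y z : Fin n → ZMod p} (h : ∀ i ∈ suppV a, y i = z i) :
    a ⬝ᵥ y = a ⬝ᵥ z := by
  refine Finset.sum_congr rfl fun i _ => ?_
  by_cases hi : a i = 0
  · simp [hi]
  · rw [h i (by simp [suppV, hi])]

theorem exists_mem_PViol_CCl_eq {a y : Fin n → ZMod p} {c : ZMod p} (hy : a ⬝ᵥ y ≠ c) :
    ∃ z ∈ PViol a c, CCl a z = CCl a y := by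
  classical
  set z : Fin n → ZMod p := fun i => if a i = 0 then 0 else y i
  have hzy : ∀ i ∈ suppV a, z i = y i := fun i hi => if_neg (Finset.mem_filter.1 hi).2
  refine ⟨z, ⟨?_, ?_⟩, CCl_congr hzy⟩
  · rwa [dotProduct_congr_suppV hzy]
  · intro i hi
    simp only [suppV, Finset.mem_filter, Finset.mem_univ, true_and] at hi ⊢
    intro hai
    simp [z, hai] at hi

theorem FEq_eq_image_CCl (a : Fin n → ZMod p) (c : ZMod p) :
    FEq a c = CCl a '' {y | a ⬝ᵥ y ≠ c} := by
  ext C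
  constructor
  · rintro ⟨x, hx, rfl⟩
    exact ⟨x, hx.1, rfl⟩
  · rintro ⟨y, hy, rfl⟩
    exact exists_mem_PViol_CCl_eq hy

theorem CCl_mem_FEq_iff {a y : Fin n → ZMod p} {c : ZMod p} :
    CCl a y ∈ FEq a c ↔ a ⬝ᵥ y ≠ c := by
  rw [FEq_eq_image_CCl]
  constructor
  · rintro ⟨z, hz, hzy⟩
    rwa [← dotProduct_congr_suppV (eq_of_CCl_eq hzy)]
  · exact fun hy => ⟨y, hy, rfl⟩

theorem DeltaCl_CCl (d a x : Fin n → ZMod p) : DeltaCl d (CCl a x) = CCl a (x + d) := by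
  simp only [DeltaCl, CCl, Finset.image_image]
  rfl

end Clauses

/-- `Δ_d` maps `F(a,c)` onto itself iff `a·d = 0` (for `a ≠ 0`): if `a·d = 0`
then `Δ_d(F(a,c)) = F(a,c)`, and if `a·d ≠ 0` then some clause of `F(a,c)` is
mapped outside `F(a,c)`. -/
theorem stmt4 {p n : ℕ} [Fact (Nat.Prime p)]
    (a d : Fin n → ZMod p) (c : ZMod p) (ha : a ≠ 0) :
    (dotProduct a d = 0 → DeltaCl d '' FEq a c = FEq a c) ∧
    (dotProduct a d ≠ 0 → ∃ C ∈ FEq a c, DeltaCl d C ∉ FEq a c) := by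
  refine ⟨fun had => ?_, fun had => ?_⟩
  · rw [FEq_eq_image_CCl, Set.image_image, funext (DeltaCl_CCl d a),
      ← Set.image_image (CCl a) (· + d), image_add_right_setOf_dotProduct_ne had]
  · obtain ⟨x, hx⟩ := exists_dotProduct_eq ha (c - a ⬝ᵥ d)
    refine ⟨CCl a x, CCl_mem_FEq_iff.2 ?_, ?_⟩
    · rwa [hx, Ne, sub_eq_self]
    · rw [DeltaCl_CCl, CCl_mem_FEq_iff, not_not, dotProduct_add, hx, sub_add_cancel]
end

section
/- For any θ ⊆ [1,n], the set of clauses Ω(θ) := { ⋁_{i∈θ} ¬ξ_{i,x_i} | x ∈ F_p^n, supp(x) ⊆ θ } together with V := ⋀_{i=1}^n ⋁_{k∈F_p} ξ_{i,k} admits a resolution refutation (derivation of the empty clause) of length at most (p^{|θ|+1} − p)/(p − 1). -/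
/-! Resolution proof system: clauses are finite sets of literals, a literal is
a pair (variable, polarity). -/

variable {V : Type} [DecidableEq V]

/-- `C` is a resolvent of `C₁` and `C₂` (on some variable `x`). -/
def Resolvent (C₁ C₂ C : Finset (V × Bool)) : Prop :=
  ∃ x : V, (x, true) ∈ C₁ ∧ (x, false) ∈ C₂ ∧
    C = C₁.erase (x, true) ∪ C₂.erase (x, false)

/-- A resolution derivation from the clause set `A`, newest clause first:
each listed clause is a resolvent of two clauses that are in `A` or occur later
in the list. -/
def IsDerivation (A : Set (Finset (V × Bool))) : List (Finset (V × Bool)) → Prop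
  | [] => True
  | c :: rest => IsDerivation A rest ∧
      ∃ c₁ c₂, (c₁ ∈ A ∨ c₁ ∈ rest) ∧ (c₂ ∈ A ∨ c₂ ∈ rest) ∧ Resolvent c₁ c₂ c

/-- `Derives A n B` : every clause of `B` can be obtained from `A` by a single
resolution derivation adding at most `n` resolvents. -/
def Derives (A : Set (Finset (V × Bool))) (n : ℕ) (B : Set (Finset (V × Bool))) : Prop :=
  ∃ L : List (Finset (V × Bool)), IsDerivation A L ∧ L.length ≤ n ∧
    B ⊆ A ∪ {c | c ∈ L}

/-- A Boolean assignment satisfies a clause if it makes some literal true. -/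
def SatClause (φ : V → Bool) (C : Finset (V × Bool)) : Prop :=
  ∃ l ∈ C, φ l.1 = l.2

/-- An assignment satisfies a set of clauses if it satisfies each of them. -/
def SatSet (φ : V → Bool) (A : Set (Finset (V × Bool))) : Prop :=
  ∀ C ∈ A, SatClause φ C

/-- `Ω(θ)` : clauses `⋁_{i∈θ} ¬ξ_{i,x_i}` for all `x` supported on `θ`. -/
def Omega (p : ℕ) {n : ℕ} (θ : Finset (Fin n)) : Set (Finset ((Fin n × ZMod p) × Bool)) :=
  {C | ∃ x : Fin n → ZMod p, suppV x ⊆ θ ∧ C = θ.image (fun i => ((i, x i), false))}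

/-!
Pick `i ∈ θ`. For each `x` supported on `θ \ {i}`, resolving the clause `⋁_k ξ_{i,k}` of `V`
successively against the `p` clauses `¬ξ_{i,k} ∨ ⋁_{j ∈ θ \ {i}} ¬ξ_{j,x_j}` of `Ω(θ)` yields
the clause of `Ω(θ \ {i})` for `x` in `p` steps. So `Ω(θ \ {i})` is derived from `Ω(θ)` in
`p^{|θ|}` steps, and iterating down to `Ω(∅) = {⊥}` costs `p^{|θ|} + ⋯ + p`.
-/

open Finset

namespace IsDerivation

theorem mono {A A' : Set (Finset (V × Bool))} (h : A ⊆ A') :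
    ∀ {L}, IsDerivation A L → IsDerivation A' L
  | [], _ => trivial
  | _ :: _, ⟨hrest, c₁, c₂, hc₁, hc₂, hr⟩ =>
    ⟨mono h hrest, c₁, c₂, hc₁.imp_left (@h _), hc₂.imp_left (@h _), hr⟩

theorem append {A : Set (Finset (V × Bool))} {L₁ L₂ : List (Finset (V × Bool))}
    (h₁ : IsDerivation A L₁) (h₂ : IsDerivation (A ∪ {c | c ∈ L₁}) L₂) :
    IsDerivation A (L₂ ++ L₁) := by
  induction L₂ with
  | nil => exact h₁
  | cons c rest ih =>
    obtain ⟨hrest, c₁, c₂, hc₁, hc₂, hr⟩ := h₂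
    have lift : ∀ {d}, d ∈ A ∪ {c | c ∈ L₁} ∨ d ∈ rest → d ∈ A ∨ d ∈ rest ++ L₁ := by
      intro d hd
      simp only [Set.mem_union, Set.mem_ofPred_eq, List.mem_append] at hd ⊢
      tauto
    exact ⟨ih hrest, c₁, c₂, lift hc₁, lift hc₂, hr⟩

end IsDerivation

theorem resolvent_insert {C D : Finset (V × Bool)} {v : V}
    (hC : (v, true) ∉ C) (hD : (v, false) ∉ D) :
    Resolvent (insert (v, true) C) (insert (v, false) D) (C ∪ D) :=
  ⟨v, mem_insert_self _ _, mem_insert_self _ _, by rw [erase_insert hC, erase_insert hD]⟩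

namespace Derives

variable {A A' B B' C : Set (Finset (V × Bool))} {m k : ℕ}

theorem of_subset (h : B ⊆ A) : Derives A 0 B :=
  ⟨[], trivial, le_rfl, fun _ hc => Or.inl (h hc)⟩

theorem of_resolvent {c₁ c₂ c : Finset (V × Bool)} (h₁ : c₁ ∈ A) (h₂ : c₂ ∈ A)
    (hr : Resolvent c₁ c₂ c) : Derives A 1 {c} :=
  ⟨[c], ⟨trivial, c₁, c₂, .inl h₁, .inl h₂, hr⟩, le_rfl, by simp⟩

theorem mono (h : A ⊆ A') (hd : Derives A m B) : Derives A' m B := by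
  obtain ⟨L, hL, hlen, hB⟩ := hd
  exact ⟨L, hL.mono h, hlen, fun c hc => (hB hc).imp_left (@h _)⟩

theorem mono_length (h : m ≤ k) (hd : Derives A m B) : Derives A k B := by
  obtain ⟨L, hL, hlen, hB⟩ := hd
  exact ⟨L, hL, hlen.trans h, hB⟩

theorem subset (h : B' ⊆ B) (hd : Derives A m B) : Derives A m B' := by
  obtain ⟨L, hL, hlen, hB⟩ := hd
  exact ⟨L, hL, hlen, hB.trans' h⟩

theorem trans (h₁ : Derives A m B) (h₂ : Derives (A ∪ B) k C) :
    Derives A (m + k) (B ∪ C) := by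
  obtain ⟨L₁, hL₁, hlen₁, hB⟩ := h₁
  obtain ⟨L₂, hL₂, hlen₂, hC⟩ := h₂
  have hAB : A ∪ B ⊆ A ∪ {c | c ∈ L₁} := Set.union_subset Set.subset_union_left hB
  refine ⟨L₂ ++ L₁, hL₁.append (hL₂.mono hAB), by rw [List.length_append]; omega, ?_⟩
  intro c hc
  have hc' : c ∈ A ∪ {c | c ∈ L₁} ∨ c ∈ L₂ := by
    rcases hc with hc | hc
    · exact .inl (hB hc)
    · exact (hC hc).imp_left (@hAB _)
  simp only [Set.mem_union, Set.mem_ofPred_eq, List.mem_append] at hc' ⊢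
  tauto

theorem union (h : Derives A m B) (h' : Derives A k B') : Derives A (m + k) (B ∪ B') :=
  h.trans (h'.mono Set.subset_union_left)

theorem biUnion {ι : Type*} [DecidableEq ι] (S : Finset ι) {f : ι → Set (Finset (V × Bool))}
    (h : ∀ a ∈ S, Derives A m (f a)) : Derives A (#S * m) (⋃ a ∈ S, f a) := by
  induction S using Finset.induction with
  | empty => exact ⟨[], trivial, Nat.zero_le _, by simp⟩
  | insert a S ha ih =>
    rw [card_insert_of_notMem ha, add_mul, one_mul, add_comm, set_biUnion_insert]
    exact (h a (mem_insert_self a S)).union (ih fun b hb => h b (mem_insert_of_mem hb))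

-- The side clause `U ⊆ T` lets the chain start from a purely positive clause, such as those
-- of `V`.
theorem of_resolve_positive {T : Finset (V × Bool)} {K : Finset V} (hK : K.Nonempty)
    (hT : ∀ v ∈ K, (v, true) ∉ T ∧ (v, false) ∉ T)
    (hneg : ∀ v ∈ K, insert (v, false) T ∈ A) :
    ∀ {U : Finset (V × Bool)}, U ⊆ T → K.image (·, true) ∪ U ∈ A → Derives A #K {T} := by
  induction hK using Nonempty.cons_induction generalizing A with
  | singleton v =>
    intro U hU hpos
    have hr := resolvent_insert (mt (@hU _) (hT v (mem_singleton_self v)).1)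
      (hT v (mem_singleton_self v)).2
    rw [Finset.union_eq_right.2 hU] at hr
    simpa using of_resolvent (by simpa using hpos) (hneg v (mem_singleton_self v)) hr
  | cons v K hv _ ih =>
    intro U hU hpos
    have hvK : ∀ w ∈ K, w ∈ cons v K hv := fun w hw => mem_cons_of_mem hw
    have hr := resolvent_insert (C := K.image (·, true) ∪ U)
      (by simpa [hv] using mt (@hU _) (hT v (mem_cons_self v K)).1)
      (hT v (mem_cons_self v K)).2
    rw [union_assoc, Finset.union_eq_right.2 hU] at hr
    have step := of_resolvent (by simpa [cons_eq_insert, image_insert] using hpos)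
      (hneg v (mem_cons_self v K)) hr
    have rest := ih (fun w hw => hT w (hvK w hw))
      (fun w hw => Set.subset_union_left (hneg w (hvK w hw))) subset_rfl
      (Set.subset_union_right (Set.mem_singleton _))
    rw [card_cons, add_comm]
    exact (step.trans rest).subset Set.subset_union_right

end Derives

def negClause {ι K : Type*} [DecidableEq ι] [DecidableEq K] (s : Finset ι) (x : ι → K) :
    Finset ((ι × K) × Bool) :=
  s.image fun i => ((i, x i), false)

theorem negClause_insert_update {ι K : Type*} [DecidableEq ι] [DecidableEq K] {s : Finset ι}
    {i : ι} (hi : i ∉ s) (x : ι → K) (k : K) :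
    negClause (insert i s) (Function.update x i k) = insert ((i, k), false) (negClause s x) := by
  rw [negClause, image_insert, Function.update_self]
  congr 1
  refine image_congr fun j hj => ?_
  rw [Function.update_of_ne (ne_of_mem_of_not_mem hj hi)]

theorem suppV_update_subset {n : ℕ} {K : Type*} [Zero K] [DecidableEq K] (x : Fin n → K)
    (i : Fin n) (k : K) : suppV (Function.update x i k) ⊆ insert i (suppV x) := by
  intro j hj
  by_cases hji : j = i
  · exact hji ▸ mem_insert_self _ _
  · simp_all [suppV]

theorem mem_piFinset_iff_suppV_subset {n : ℕ} {K : Type*} [Zero K] [DecidableEq K]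
    [Fintype K] (s : Finset (Fin n)) (x : Fin n → K) :
    x ∈ Fintype.piFinset (fun j => if j ∈ s then univ else {0}) ↔ suppV x ⊆ s := by
  simp only [Fintype.mem_piFinset, suppV, subset_iff, mem_filter, mem_univ, true_and]
  refine forall_congr' fun j => ?_
  by_cases hj : j ∈ s <;> simp [hj]

theorem sum_range_pow_succ_eq_div {p : ℕ} (hp : 1 < p) (m : ℕ) :
    ∑ k ∈ range m, p ^ (k + 1) = (p ^ (m + 1) - p) / (p - 1) := by
  have h := geom_sum_mul_add (p - 1) m
  rw [Nat.sub_add_cancel hp.le] at h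
  refine (Nat.div_eq_of_eq_mul_left (by omega) ?_).symm
  simp only [pow_succ, ← sum_mul]
  rw [← h]
  simp only [add_mul, one_mul, Nat.add_sub_cancel]
  ring

variable {p n : ℕ} [NeZero p]

theorem derives_negClause {s : Finset (Fin n)} {i : Fin n} (hi : i ∉ s) {x : Fin n → ZMod p}
    (hx : suppV x ⊆ s) :
    Derives (Omega p (insert i s) ∪ VCl n p) p {negClause s x} := by
  have hK : #(univ.image (Prod.mk i) : Finset (Fin n × ZMod p)) = p := by
    rw [card_image_of_injective _ (Prod.mk_right_injective i), card_univ, ZMod.card]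
  refine (Derives.of_resolve_positive (univ_nonempty.image _) ?_ ?_ (empty_subset _) ?_).mono_length
    hK.le
  · simp only [mem_image, mem_univ, true_and, forall_exists_index, forall_apply_eq_imp_iff]
    intro k
    simp only [negClause, mem_image, Prod.ext_iff, not_exists, not_and]
    exact ⟨fun _ _ _ => Bool.false_ne_true, fun j hj h _ => hi (h.1 ▸ hj)⟩
  · simp only [mem_image, mem_univ, true_and, forall_exists_index, forall_apply_eq_imp_iff]
    intro k
    rw [← negClause_insert_update hi]
    exact .inl ⟨_, (suppV_update_subset x i k).trans (insert_subset_insert i hx), rfl⟩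
  · rw [union_empty, image_image]
    exact .inr ⟨i, rfl⟩

theorem derives_omega_of_insert {s : Finset (Fin n)} {i : Fin n} (hi : i ∉ s) :
    Derives (Omega p (insert i s) ∪ VCl n p) (p ^ (#s + 1)) (Omega p s) := by
  set S := Fintype.piFinset fun j => if j ∈ s then (univ : Finset (ZMod p)) else {0}
  have hS : #S = p ^ #s := by
    simp [S, Fintype.card_piFinset, apply_ite, prod_ite_mem]
  have hcover : Omega p s ⊆ ⋃ x ∈ S, {negClause s x} := by
    rintro C ⟨x, hx, rfl⟩
    exact Set.mem_biUnion ((mem_piFinset_iff_suppV_subset s x).2 hx) rfl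
  rw [pow_succ, ← hS]
  refine (Derives.biUnion S fun x hx => ?_).subset hcover
  exact derives_negClause hi ((mem_piFinset_iff_suppV_subset s x).1 hx)

theorem derives_empty_clause (s : Finset (Fin n)) :
    Derives (Omega p s ∪ VCl n p) (∑ k ∈ range #s, p ^ (k + 1)) {∅} := by
  induction s using Finset.induction with
  | empty =>
    refine Derives.of_subset ?_
    rintro _ rfl
    exact .inl ⟨0, by simp [suppV], by simp⟩
  | insert i s hi ih =>
    rw [card_insert_of_notMem hi, sum_range_succ, add_comm]
    refine ((derives_omega_of_insert hi).trans (ih.mono ?_)).subset Set.subset_union_right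
    exact Set.union_subset Set.subset_union_right
      (Set.subset_union_right.trans Set.subset_union_left)

/-- `Ω(θ) ∧ V` has a resolution refutation of length at most `(p^{|θ|+1} − p)/(p − 1)`. -/
theorem stmt7 {p n : ℕ} [Fact (Nat.Prime p)] (θ : Finset (Fin n)) :
    Derives (Omega p θ ∪ VCl n p) ((p ^ (θ.card + 1) - p) / (p - 1))
      {(∅ : Finset ((Fin n × ZMod p) × Bool))} := by
  rw [← sum_range_pow_succ_eq_div (Fact.out : p.Prime).one_lt]
  exact derives_empty_clause θ
end

section
/- If a_1, a_2 ∈ F_p^n satisfy lv(a_1, a_2) = ∅ (no coefficient cancels in the sum), then F(a_1 + a_2, b_1 + b_2) ⊑ F(a_1, b_1) ∪ F(a_2, b_2), i.e., every clause of F(a_1+a_2, b_1+b_2) contains some clause of F(a_1,b_1) ∪ F(a_2,b_2) as a subset. -/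
/-! If `a₁ + a₂` cancels no coefficient then `supp a₁, supp a₂ ⊆ supp (a₁ + a₂)`. A violated
clause `C_{a₁+a₂}(x)` has `a₁·x + a₂·x ≠ b₁ + b₂`, so `x` violates one of the two equations, say
`aⱼ·x ≠ bⱼ`; restricting `x` to `supp aⱼ` keeps that violation and gives the clause
`C_{aⱼ}(x) ⊆ C_{a₁+a₂}(x)`. -/

@[simp]
lemma mem_suppV {n : ℕ} {K : Type*} [Zero K] [DecidableEq K] {a : Fin n → K} {i : Fin n} :
    i ∈ suppV a ↔ a i ≠ 0 := by
  simp [suppV]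

lemma CCl_mem_FEq {p n : ℕ} {a x : Fin n → ZMod p} {b : ZMod p} (hx : dotProduct a x ≠ b) :
    CCl a x ∈ FEq a b := by
  set y : Fin n → ZMod p := fun i => if a i = 0 then 0 else x i
  have hay : dotProduct a y = dotProduct a x :=
    Finset.sum_congr rfl fun i _ => by by_cases hi : a i = 0 <;> simp [y, hi]
  have hsupp : suppV y ⊆ suppV a := fun i hi => mem_suppV.mpr fun ha => by simp [y, ha] at hi
  have hclause : CCl a y = CCl a x := Finset.image_congr fun i hi => by simp_all [y]
  exact ⟨y, ⟨hay ▸ hx, hsupp⟩, hclause⟩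

lemma CCl_mono {p n : ℕ} {a a' : Fin n → ZMod p} (h : suppV a ⊆ suppV a') (x : Fin n → ZMod p) :
    CCl a x ⊆ CCl a' x :=
  Finset.image_subset_image h

theorem stmt10_general {p n : ℕ}
    (a₁ a₂ : Fin n → ZMod p) (b₁ b₂ : ZMod p)
    (h : (suppV a₁ ∪ suppV a₂) \ suppV (a₁ + a₂) = ∅) :
    ∀ C ∈ FEq (a₁ + a₂) (b₁ + b₂), ∃ C' ∈ FEq a₁ b₁ ∪ FEq a₂ b₂, C' ⊆ C := by
  rintro C ⟨x, ⟨hx, -⟩, rfl⟩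
  obtain ⟨hsub₁, hsub₂⟩ := Finset.union_subset_iff.mp (Finset.sdiff_eq_empty_iff_subset.mp h)
  by_cases hx₁ : dotProduct a₁ x = b₁
  · have hx₂ : dotProduct a₂ x ≠ b₂ := fun hx₂ => hx (by rw [add_dotProduct, hx₁, hx₂])
    exact ⟨CCl a₂ x, Or.inr (CCl_mem_FEq hx₂), CCl_mono hsub₂ x⟩
  · exact ⟨CCl a₁ x, Or.inl (CCl_mem_FEq hx₁), CCl_mono hsub₁ x⟩

/-- If no coefficient cancels in `a₁ + a₂`, then every clause of
`F(a₁+a₂, b₁+b₂)` contains some clause of `F(a₁,b₁) ∪ F(a₂,b₂)`. -/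
theorem stmt10 {p n : ℕ} [Fact (Nat.Prime p)]
    (a₁ a₂ : Fin n → ZMod p) (b₁ b₂ : ZMod p)
    (h : (suppV a₁ ∪ suppV a₂) \ suppV (a₁ + a₂) = ∅) :
    ∀ C ∈ FEq (a₁ + a₂) (b₁ + b₂), ∃ C' ∈ FEq a₁ b₁ ∪ FEq a₂ b₂, C' ⊆ C :=
  stmt10_general a₁ a₂ b₁ b₂ h
end

section
/- The CFI gadget X_N on a finite set N of size n ≥ 1 has exactly 2^{n−1} automorphisms (as a colored graph), and each automorphism is uniquely determined by a subset S ⊆ N of even cardinality: it swaps a_w and b_w exactly for w ∈ S, and permutes the middle vertices accordingly (m_T ↦ m_{T Δ S}). -/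
/-!
Colour preservation forces an automorphism `f` to fix or swap each pair `{a_w, b_w}`; let `S` be
the set of swapped indices. Since `m_T` is adjacent to `a_w` exactly when `w ∈ T`, the image of
`m_T` must be `m_{T Δ S}`, and `m_∅ ↦ m_S` shows that `S` is even. Conversely every even `S`
defines such an automorphism, so automorphisms correspond to even subsets of `N`.
-/

/-- Vertices of the CFI gadget `X_N` for `N = Fin n`: vertices `a w`, `b w`
for `w ∈ N` and middle vertices `m T` for even-cardinality `T ⊆ N`. -/
inductive CFIV (n : ℕ) where
  | a : Fin n → CFIV n
  | b : Fin n → CFIV n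
  | m : {T : Finset (Fin n) // Even T.card} → CFIV n

/-- Adjacency of the CFI gadget: `m T` is adjacent to `a w` iff `w ∈ T`
and to `b w` iff `w ∉ T`. -/
def CFIAdj {n : ℕ} : CFIV n → CFIV n → Prop
  | .m T, .a w => w ∈ T.1
  | .a w, .m T => w ∈ T.1
  | .m T, .b w => w ∉ T.1
  | .b w, .m T => w ∉ T.1
  | _, _ => False

/-- Coloring: `a w` and `b w` both get color `c_w` (encoded `Sum.inl w`), all
middle vertices get a common color `m` (encoded `Sum.inr ()`). -/
def CFIColor {n : ℕ} : CFIV n → Fin n ⊕ Unit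
  | .a w => Sum.inl w
  | .b w => Sum.inl w
  | .m _ => Sum.inr ()

/-- A color-preserving automorphism of the CFI gadget. -/
def IsCFIAut {n : ℕ} (f : CFIV n ≃ CFIV n) : Prop :=
  (∀ u v, CFIAdj (f u) (f v) ↔ CFIAdj u v) ∧ ∀ v, CFIColor (f v) = CFIColor v

open scoped symmDiff

namespace Finset

variable {α : Type*} [DecidableEq α]

theorem card_symmDiff_add_two_mul_card_inter (s t : Finset α) :
    (s ∆ t).card + 2 * (s ∩ t).card = s.card + t.card := by
  rw [symmDiff_eq_sup_sdiff_inf, sup_eq_union, inf_eq_inter,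
    card_sdiff_of_subset inter_subset_union]
  have := card_union_add_card_inter s t
  have := card_le_card (inter_subset_union : s ∩ t ⊆ s ∪ t)
  omega

theorem even_card_symmDiff_iff (s t : Finset α) :
    Even (s ∆ t).card ↔ (Even s.card ↔ Even t.card) := by
  rw [← Nat.even_add, ← card_symmDiff_add_two_mul_card_inter]
  simp [Nat.even_add]

/-- Toggling a fixed element `x` swaps the subsets of even and of odd cardinality. -/
theorem card_subtype_even_card [Fintype α] [Nonempty α] :
    Fintype.card {s : Finset α // Even s.card} = 2 ^ (Fintype.card α - 1) := by
  obtain ⟨x⟩ := ‹Nonempty α›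
  have hflip : Fintype.card {s : Finset α // Even s.card} =
      Fintype.card {s : Finset α // ¬Even s.card} :=
    Fintype.card_congr <| (symmDiff_left_involutive {x}).toPerm.subtypeEquiv fun s => by
      simp [even_card_symmDiff_iff]
  have hcompl := Fintype.card_subtype_compl fun s : Finset α => Even s.card
  have hle := Fintype.card_subtype_le fun s : Finset α => Even s.card
  obtain ⟨k, hk⟩ : ∃ k, Fintype.card α = k + 1 :=
    Nat.exists_eq_add_one.mpr Fintype.card_pos
  rw [Fintype.card_finset, hk, pow_succ] at hcompl hle
  rw [hk, Nat.add_sub_cancel]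
  omega

end Finset

section CFI

variable {n : ℕ}

def cfiSwap (S : {S : Finset (Fin n) // Even S.card}) : CFIV n → CFIV n
  | .a w => if w ∈ S.1 then .b w else .a w
  | .b w => if w ∈ S.1 then .a w else .b w
  | .m T => .m ⟨T.1 ∆ S.1, (Finset.even_card_symmDiff_iff _ _).mpr (iff_of_true T.2 S.2)⟩

theorem cfiSwap_involutive (S : {S : Finset (Fin n) // Even S.card}) :
    Function.Involutive (cfiSwap S) := by
  rintro (w | w | T) <;> simp only [cfiSwap] <;> (try split_ifs) <;> simp [*]

def cfiSwapPerm (S : {S : Finset (Fin n) // Even S.card}) : CFIV n ≃ CFIV n :=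
  (cfiSwap_involutive S).toPerm

@[simp]
theorem coe_cfiSwapPerm (S : {S : Finset (Fin n) // Even S.card}) :
    ⇑(cfiSwapPerm S) = cfiSwap S :=
  rfl

theorem isCFIAut_cfiSwapPerm (S : {S : Finset (Fin n) // Even S.card}) :
    IsCFIAut (cfiSwapPerm S) := by
  refine ⟨?_, ?_⟩
  · rintro (w | w | T) (w' | w' | T') <;> simp only [coe_cfiSwapPerm, cfiSwap] <;>
      (try split_ifs) <;> simp [CFIAdj, Finset.mem_symmDiff, *]
  · rintro (w | w | T) <;> simp only [coe_cfiSwapPerm, cfiSwap] <;> (try split_ifs) <;> rfl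

theorem CFIV.ite_b_a_eq_b_iff {p : Prop} [Decidable p] {w : Fin n} :
    (if p then CFIV.b w else .a w) = .b w ↔ p := by
  split_ifs <;> simp [*]

theorem cfiSwapPerm_injective : Function.Injective (cfiSwapPerm (n := n)) := by
  intro S S' h
  ext w
  have hw := DFunLike.congr_fun h (.a w)
  simp only [coe_cfiSwapPerm, cfiSwap] at hw
  rw [← CFIV.ite_b_a_eq_b_iff (p := w ∈ S.1), hw, CFIV.ite_b_a_eq_b_iff]

theorem cfiColor_eq_inl_iff {v : CFIV n} {w : Fin n} :
    CFIColor v = .inl w ↔ v = .a w ∨ v = .b w := by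
  cases v <;> simp [CFIColor, eq_comm]

theorem cfiColor_eq_inr_iff {v : CFIV n} :
    CFIColor v = .inr () ↔ ∃ T, v = .m T := by
  cases v <;> simp [CFIColor]

open Classical in
noncomputable def cfiSwapSet (f : CFIV n ≃ CFIV n) : Finset (Fin n) :=
  {w | f (.a w) = .b w}

theorem mem_cfiSwapSet {f : CFIV n ≃ CFIV n} {w : Fin n} :
    w ∈ cfiSwapSet f ↔ f (.a w) = .b w := by
  simp [cfiSwapSet]

namespace IsCFIAut

variable {f : CFIV n ≃ CFIV n} (hf : IsCFIAut f)
include hf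

theorem apply_a (w : Fin n) : f (.a w) = if w ∈ cfiSwapSet f then .b w else .a w := by
  rcases cfiColor_eq_inl_iff.mp (hf.2 (.a w)) with h | h <;> simp [mem_cfiSwapSet, h]

theorem apply_b (w : Fin n) : f (.b w) = if w ∈ cfiSwapSet f then .a w else .b w := by
  have hne : f (.a w) ≠ f (.b w) := f.injective.ne (by simp)
  rw [hf.apply_a w] at hne
  rcases cfiColor_eq_inl_iff.mp (hf.2 (.b w)) with h | h <;> split_ifs at hne ⊢ <;> simp_all

theorem apply_m (T : {T : Finset (Fin n) // Even T.card}) :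
    ∃ h : Even (T.1 ∆ cfiSwapSet f).card, f (.m T) = .m ⟨T.1 ∆ cfiSwapSet f, h⟩ := by
  obtain ⟨⟨T', hT'⟩, hfT⟩ := cfiColor_eq_inr_iff.mp (hf.2 (.m T))
  obtain rfl : T' = T.1 ∆ cfiSwapSet f := by
    ext w
    have hadj := hf.1 (.m T) (.a w)
    rw [hfT, hf.apply_a w] at hadj
    split_ifs at hadj with hw <;> simp [CFIAdj, Finset.mem_symmDiff, hw] at hadj ⊢ <;> tauto
  exact ⟨hT', hfT⟩

theorem even_card_cfiSwapSet : Even (cfiSwapSet f).card := by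
  simpa [← Finset.bot_eq_empty] using (hf.apply_m ⟨∅, by simp⟩).1

theorem eq_cfiSwapPerm : f = cfiSwapPerm ⟨cfiSwapSet f, hf.even_card_cfiSwapSet⟩ := by
  ext (w | w | T)
  · simp [cfiSwap, hf.apply_a]
  · simp [cfiSwap, hf.apply_b]
  · obtain ⟨_, h⟩ := hf.apply_m T
    simp [cfiSwap, h]

end IsCFIAut

noncomputable def cfiAutEquiv :
    {S : Finset (Fin n) // Even S.card} ≃ {f : CFIV n ≃ CFIV n // IsCFIAut f} :=
  Equiv.ofBijective (fun S => ⟨cfiSwapPerm S, isCFIAut_cfiSwapPerm S⟩)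
    ⟨fun _ _ h => cfiSwapPerm_injective (congrArg Subtype.val h),
      fun ⟨_, hf⟩ => ⟨_, Subtype.ext hf.eq_cfiSwapPerm.symm⟩⟩

end CFI

/-- The CFI gadget on `n ≥ 1` points has exactly `2^{n-1}` color-preserving
automorphisms, and each of them is uniquely determined by a subset `S ⊆ N` of
even cardinality: it swaps `a w` and `b w` exactly for `w ∈ S` and maps
`m T` to `m (T Δ S)`. -/
theorem stmt14 {n : ℕ} (hn : 1 ≤ n) :
    Nat.card {f : CFIV n ≃ CFIV n // IsCFIAut f} = 2 ^ (n - 1) ∧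
    ∀ f : CFIV n ≃ CFIV n, IsCFIAut f →
      ∃! S : Finset (Fin n), Even S.card ∧
        (∀ w, f (.a w) = if w ∈ S then .b w else .a w) ∧
        (∀ w, f (.b w) = if w ∈ S then .a w else .b w) ∧
        (∀ T : {T : Finset (Fin n) // Even T.card},
          ∃ h : Even (symmDiff T.1 S).card, f (.m T) = .m ⟨symmDiff T.1 S, h⟩) := by
  refine ⟨?_, fun f hf => ⟨cfiSwapSet f,
    ⟨hf.even_card_cfiSwapSet, hf.apply_a, hf.apply_b, hf.apply_m⟩, ?_⟩⟩
  · have : Nonempty (Fin n) := ⟨⟨0, hn⟩⟩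
    rw [← Nat.card_congr cfiAutEquiv, Nat.card_eq_fintype_card, Finset.card_subtype_even_card,
      Fintype.card_fin]
  · rintro S ⟨-, ha, -⟩
    ext w
    rw [← CFIV.ite_b_a_eq_b_iff (p := w ∈ S), ← ha w, mem_cfiSwapSet]
end

section
/- For every finite set N and every subset S ⊆ N of even cardinality, the map on X_N that sends a_w ↔ b_w for w ∈ S, fixes a_w, b_w for w ∉ S, and sends m_T to m_{T Δ S}, is a color-preserving graph automorphism of X_N. -/
/-! Since `w ∈ T ∆ S ↔ (w ∈ T ↔ w ∉ S)`, replacing `m_T` by `m_{T ∆ S}` toggles the edges from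
`m_T` to `a_w` and `b_w` exactly for the `w ∈ S` whose `a_w`, `b_w` are swapped, so every
adjacency is preserved. -/

theorem Finset.card_symmDiff_add_two_mul_card_inter_s15 {α : Type*} [DecidableEq α] (s t : Finset α) :
    (symmDiff s t).card + 2 * (s ∩ t).card = s.card + t.card := by
  rw [symmDiff_eq_sup_sdiff_inf, Finset.sup_eq_union, Finset.inf_eq_inter,
    Finset.card_sdiff_of_subset Finset.inter_subset_union, ← Finset.card_union_add_card_inter]
  have := Finset.card_le_card (Finset.inter_subset_union (s := s) (t := t))
  omega

theorem Finset.even_card_symmDiff {α : Type*} [DecidableEq α] {s t : Finset α}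
    (hs : Even s.card) (ht : Even t.card) : Even (symmDiff s t).card := by
  have h := Finset.card_symmDiff_add_two_mul_card_inter_s15 s t ▸ hs.add ht
  exact (Nat.even_add.mp h).mpr (even_two_mul _)

namespace CFIV

variable {n : ℕ} (S : Finset (Fin n)) (hS : Even S.card)

def twist : CFIV n → CFIV n
  | a w => if w ∈ S then b w else a w
  | b w => if w ∈ S then a w else b w
  | m T => m ⟨symmDiff T.1 S, Finset.even_card_symmDiff T.2 hS⟩

theorem twist_involutive : Function.Involutive (twist S hS) := by
  rintro (w | w | T)
  · by_cases hw : w ∈ S <;> simp [twist, hw]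
  · by_cases hw : w ∈ S <;> simp [twist, hw]
  · simp [twist, symmDiff_symmDiff_cancel_right]

theorem cfiAdj_twist (u v : CFIV n) : CFIAdj (twist S hS u) (twist S hS v) ↔ CFIAdj u v := by
  cases u <;> cases v <;> simp only [twist] <;> try split_ifs
  all_goals simp_all [CFIAdj, Finset.mem_symmDiff]

theorem cfiColor_twist (v : CFIV n) : CFIColor (twist S hS v) = CFIColor v := by
  cases v <;> simp only [twist] <;> try split_ifs
  all_goals rfl

def twistEquiv : CFIV n ≃ CFIV n := (twist_involutive S hS).toPerm

theorem isCFIAut_twistEquiv : IsCFIAut (twistEquiv S hS) :=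
  ⟨cfiAdj_twist S hS, cfiColor_twist S hS⟩

end CFIV

/-- For every even-cardinality `S ⊆ N`, the map swapping `a w ↔ b w` for
`w ∈ S`, fixing `a w, b w` for `w ∉ S`, and sending `m T` to `m (T Δ S)`, is a
color-preserving automorphism of the CFI gadget `X_N`. -/
theorem stmt15 {n : ℕ} (S : Finset (Fin n)) (hS : Even S.card) :
    ∃ f : CFIV n ≃ CFIV n,
      (∀ w, f (.a w) = if w ∈ S then .b w else .a w) ∧
      (∀ w, f (.b w) = if w ∈ S then .a w else .b w) ∧
      (∀ T : {T : Finset (Fin n) // Even T.card},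
        ∃ h : Even (symmDiff T.1 S).card, f (.m T) = .m ⟨symmDiff T.1 S, h⟩) ∧
      IsCFIAut f :=
  ⟨CFIV.twistEquiv S hS, fun _ => rfl, fun _ => rfl, fun _ => ⟨_, rfl⟩, CFIV.isCFIAut_twistEquiv S hS⟩
end
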